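/- arXiv:1907.06227 — 5 statements merged into one kernel-verified Lean document; each statement's English description precedes it below -/
import Mathlib

section
/- For every Φ ∈ ℝ^{N×M} and all indices 1 ≤ i ≤ N, 1 ≤ m ≤ M, the squared Frobenius norm of the entrywise partial derivative of X(Φ)ᴴX(Φ) with respect to the phase Φ_{i,m} satisfies Σ_{p=1}^{M} Σ_{q=1}^{M} |∂(X(Φ)ᴴX(Φ))_{p,q}/∂Φ_{i,m}|² ≤ 2(M−1). -/
/-!
Only the term `k = i` of `(X(Φ)ᴴX(Φ))_{p,q} = ∑ₖ exp(i(Φ_{k,q} − Φ_{k,p}))` depends on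
`Φ_{i,m}`, with phase slope `δ_{q,m} − δ_{p,m}`. Hence the partial derivative has modulus
`|δ_{q,m} − δ_{p,m}|`: it is `1` exactly on the `2(M − 1)` off-diagonal entries of row and
column `m`, and `0` elsewhere, so the bound holds with equality.
-/

open Matrix Complex

noncomputable def Xmat {N M : ℕ} (Φ : Matrix (Fin N) (Fin M) ℝ) : Matrix (Fin N) (Fin M) ℂ :=
  fun k m => Complex.exp (Complex.I * (Φ k m : ℂ))

def updE {N M : ℕ} (Φ : Matrix (Fin N) (Fin M) ℝ) (i : Fin N) (m : Fin M) (t : ℝ) :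
    Matrix (Fin N) (Fin M) ℝ :=
  fun k l => if k = i ∧ l = m then t else Φ k l

section

variable {N M : ℕ}

lemma conjTranspose_Xmat_mul_Xmat_apply (Φ : Matrix (Fin N) (Fin M) ℝ) (p q : Fin M) :
    ((Xmat Φ)ᴴ * Xmat Φ) p q = ∑ k : Fin N, cexp (I * ((Φ k q - Φ k p : ℝ) : ℂ)) := by
  rw [mul_apply]
  refine Finset.sum_congr rfl fun k _ => ?_
  rw [conjTranspose_apply, Xmat, Xmat, star_def, ← exp_conj, ← exp_add]
  congr 1
  simp only [map_mul, conj_I, conj_ofReal, ofReal_sub]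
  ring

lemma hasDerivAt_conjTranspose_Xmat_mul_Xmat_apply {ψ : ℝ → Matrix (Fin N) (Fin M) ℝ}
    {ψ' : Matrix (Fin N) (Fin M) ℝ} {t₀ : ℝ}
    (hψ : ∀ k l, HasDerivAt (fun t => ψ t k l) (ψ' k l) t₀) (p q : Fin M) :
    HasDerivAt (fun t => ((Xmat (ψ t))ᴴ * Xmat (ψ t)) p q)
      (∑ k : Fin N,
        cexp (I * ((ψ t₀ k q - ψ t₀ k p : ℝ) : ℂ)) * (I * ((ψ' k q - ψ' k p : ℝ) : ℂ))) t₀ := by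
  simp_rw [conjTranspose_Xmat_mul_Xmat_apply]
  exact HasDerivAt.fun_sum fun k _ => (((hψ k q).sub (hψ k p)).ofReal_comp.const_mul I).cexp

lemma hasDerivAt_updE_apply (Φ : Matrix (Fin N) (Fin M) ℝ) (i : Fin N) (m : Fin M) (t₀ : ℝ)
    (k : Fin N) (l : Fin M) :
    HasDerivAt (fun t => updE Φ i m t k l) (if k = i ∧ l = m then 1 else 0) t₀ := by
  by_cases h : k = i ∧ l = m
  · simpa only [updE, if_pos h] using hasDerivAt_id' t₀
  · simpa only [updE, if_neg h] using hasDerivAt_const t₀ (Φ k l)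

lemma updE_self (Φ : Matrix (Fin N) (Fin M) ℝ) (i : Fin N) (m : Fin M) :
    updE Φ i m (Φ i m) = Φ := by
  ext k l
  by_cases h : k = i ∧ l = m
  · rw [updE, if_pos h, h.1, h.2]
  · rw [updE, if_neg h]

lemma norm_deriv_conjTranspose_Xmat_mul_Xmat_updE_apply (Φ : Matrix (Fin N) (Fin M) ℝ)
    (i : Fin N) (m : Fin M) (p q : Fin M) :
    ‖deriv (fun t => ((Xmat (updE Φ i m t))ᴴ * Xmat (updE Φ i m t)) p q) (Φ i m)‖
      = |(if q = m then 1 else 0) - (if p = m then 1 else 0)| := by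
  rw [(hasDerivAt_conjTranspose_Xmat_mul_Xmat_apply (hasDerivAt_updE_apply Φ i m _) p q).deriv,
    updE_self, Finset.sum_eq_single i (fun k _ hk => by simp [hk]) (by simp)]
  rw [norm_mul, norm_exp_I_mul_ofReal, one_mul, norm_mul, norm_I, one_mul, norm_real,
    Real.norm_eq_abs]
  simp

end

lemma sum_sum_sub_ite_eq_sq {ι : Type*} [Fintype ι] [DecidableEq ι] (m : ι) :
    ∑ p : ι, ∑ q : ι, ((if q = m then (1 : ℝ) else 0) - (if p = m then 1 else 0)) ^ 2
      = 2 * ((Fintype.card ι : ℝ) - 1) := by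
  simp only [sub_sq, ite_pow, one_pow, ne_eq, OfNat.ofNat_ne_zero, not_false_eq_true, zero_pow,
    mul_ite, mul_one, mul_zero, Finset.sum_add_distrib, Finset.sum_sub_distrib,
    Finset.sum_ite_eq', Finset.mem_univ, ↓reduceIte, Finset.sum_ite_irrel, Finset.sum_const_zero,
    Finset.sum_const, Finset.card_univ, nsmul_eq_mul]
  ring

theorem stmt5_general (N M : ℕ)
    (Φ : Matrix (Fin N) (Fin M) ℝ) (i : Fin N) (m : Fin M) :
    ∑ p : Fin M, ∑ q : Fin M,
      ‖deriv (fun t : ℝ =>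
        ((Xmat (updE Φ i m t))ᴴ * Xmat (updE Φ i m t)) p q) (Φ i m)‖ ^ 2
      ≤ 2 * ((M : ℝ) - 1) := by
  simp_rw [norm_deriv_conjTranspose_Xmat_mul_Xmat_updE_apply, sq_abs]
  rw [sum_sum_sub_ite_eq_sq, Fintype.card_fin]

/-- The squared Frobenius norm of the entrywise partial derivative of `X(Φ)ᴴX(Φ)`
with respect to `Φ_{i,m}` is bounded by `2(M−1)`. -/
theorem stmt5 (N M : ℕ) (hN : 1 ≤ N) (hM : 1 ≤ M)
    (Φ : Matrix (Fin N) (Fin M) ℝ) (i : Fin N) (m : Fin M) :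
    ∑ p : Fin M, ∑ q : Fin M,
      ‖deriv (fun t : ℝ =>
        ((Xmat (updE Φ i m t))ᴴ * Xmat (updE Φ i m t)) p q) (Φ i m)‖ ^ 2
      ≤ 2 * ((M : ℝ) - 1) :=
  stmt5_general N M Φ i m
end

section
/- For every Φ ∈ ℝ^{N×M} and all indices 1 ≤ i ≤ N, 1 ≤ m ≤ M, one has |Σ_{p=1}^{M} Σ_{q=1}^{M} conj(∂²(X(Φ)ᴴX(Φ))_{p,q}/∂Φ_{i,m}²) · ((X(Φ)ᴴX(Φ))_{p,q} − N δ_{pq})| ≤ 2(M−1)N, where δ_{pq} is the Kronecker delta. -/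
open Matrix

/-!
Only the `k = i` summand of `(XᴴX)_{pq} = Σ_k exp(i(Φ_{kq} − Φ_{kp}))` depends on `Φ_{im}`,
through the phase `Φ_{iq} − Φ_{ip}`, whose slope in `Φ_{im}` is `s_{pq} = δ_{qm} − δ_{pm}`.
Hence the second derivative of `(XᴴX)_{pq}` has modulus `s_{pq}²`, while
`|(XᴴX − N·I)_{pq}| ≤ N` for all `p, q`. Since `Σ_{p,q} s_{pq}² = 2(M − 1)`, the triangle
inequality gives the bound.
-/

open Complex

section Gram

variable {N M : ℕ}

lemma Xmat_gram_apply (Ψ : Matrix (Fin N) (Fin M) ℝ) (p q : Fin M) :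
    ((Xmat Ψ)ᴴ * Xmat Ψ) p q = ∑ k, cexp (I * ↑(Ψ k q - Ψ k p)) := by
  refine (mul_apply).trans (Finset.sum_congr rfl fun k _ => ?_)
  rw [conjTranspose_apply, Xmat, Xmat, star_def, ← exp_conj, ← exp_add]
  simp only [map_mul, conj_I, conj_ofReal, ofReal_sub]
  ring_nf

lemma norm_Xmat_gram_apply_le (Ψ : Matrix (Fin N) (Fin M) ℝ) (p q : Fin M) :
    ‖((Xmat Ψ)ᴴ * Xmat Ψ) p q‖ ≤ N := by
  rw [Xmat_gram_apply]
  refine (norm_sum_le _ _).trans_eq ?_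
  simp only [norm_exp_I_mul_ofReal, Finset.sum_const, Finset.card_univ, Fintype.card_fin,
    nsmul_eq_mul, mul_one]

lemma norm_Xmat_gram_sub_diagonal_le (Ψ : Matrix (Fin N) (Fin M) ℝ) (p q : Fin M) :
    ‖((Xmat Ψ)ᴴ * Xmat Ψ) p q - if p = q then (N : ℂ) else 0‖ ≤ N := by
  split_ifs with hpq
  · simp [hpq, Xmat_gram_apply]
  · simpa using norm_Xmat_gram_apply_le Ψ p q

end Gram

lemma deriv_deriv_const_add_cexp (C a b : ℂ) (t₀ : ℝ) :
    deriv (deriv fun t : ℝ => C + cexp (a + b * ↑(t - t₀))) t₀ = b ^ 2 * cexp a := by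
  have hasDeriv : ∀ c t, HasDerivAt (fun t : ℝ => c * cexp (a + b * ↑(t - t₀)))
      (c * b * cexp (a + b * ↑(t - t₀))) t := by
    intro c t
    exact ((((hasDerivAt_id t).sub_const t₀).ofReal_comp.const_mul b).const_add a).cexp
      |>.const_mul c |>.congr_deriv (by simp only [id, ofReal_one]; ring)
  have first : deriv (fun t : ℝ => C + cexp (a + b * ↑(t - t₀)))
      = fun t => b * cexp (a + b * ↑(t - t₀)) := by
    funext t
    simpa using ((hasDeriv 1 t).const_add C).deriv
  rw [first, (hasDeriv b t₀).deriv]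
  simp [sq]

section Update

variable {N M : ℕ} (Φ : Matrix (Fin N) (Fin M) ℝ) (i : Fin N) (m : Fin M)

lemma updE_apply_of_ne {k : Fin N} (hk : k ≠ i) (t : ℝ) (l : Fin M) :
    updE Φ i m t k l = Φ k l := by
  simp [updE, hk]

lemma updE_sub_updE (t : ℝ) (p q : Fin M) :
    updE Φ i m t i q - updE Φ i m t i p
      = Φ i q - Φ i p
        + ((if q = m then 1 else 0) - (if p = m then 1 else 0)) * (t - Φ i m) := by
  simp only [updE, true_and]
  split_ifs <;> subst_vars <;> ring

lemma Xmat_gram_updE_apply (p q : Fin M) :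
    (fun t => ((Xmat (updE Φ i m t))ᴴ * Xmat (updE Φ i m t)) p q)
      = fun t => (∑ k ∈ Finset.univ.erase i, cexp (I * ↑(Φ k q - Φ k p)))
        + cexp (I * ↑(Φ i q - Φ i p)
          + I * ↑((if q = m then 1 else 0) - (if p = m then 1 else 0) : ℝ)
            * ↑(t - Φ i m)) := by
  funext t
  rw [Xmat_gram_apply, ← Finset.add_sum_erase _ _ (Finset.mem_univ i), add_comm, updE_sub_updE]
  congr 1
  · refine Finset.sum_congr rfl fun k hk => ?_
    simp only [updE_apply_of_ne Φ i m (Finset.ne_of_mem_erase hk)]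
  · push_cast; ring_nf

lemma deriv_deriv_Xmat_gram_updE (p q : Fin M) :
    deriv (deriv fun t => ((Xmat (updE Φ i m t))ᴴ * Xmat (updE Φ i m t)) p q) (Φ i m)
      = -↑(((if q = m then 1 else 0) - (if p = m then 1 else 0) : ℝ) ^ 2)
        * cexp (I * ↑(Φ i q - Φ i p)) := by
  rw [Xmat_gram_updE_apply, deriv_deriv_const_add_cexp, mul_pow, I_sq]
  push_cast; ring

lemma norm_deriv_deriv_Xmat_gram_updE (p q : Fin M) :
    ‖deriv (deriv fun t => ((Xmat (updE Φ i m t))ᴴ * Xmat (updE Φ i m t)) p q) (Φ i m)‖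
      = ((if q = m then 1 else 0) - (if p = m then 1 else 0) : ℝ) ^ 2 := by
  rw [deriv_deriv_Xmat_gram_updE, norm_mul, norm_neg, norm_exp_I_mul_ofReal, mul_one,
    norm_real, Real.norm_of_nonneg (sq_nonneg _)]

end Update

lemma sum_sum_indicator_sub_indicator_sq {M : ℕ} (m : Fin M) :
    ∑ p : Fin M, ∑ q : Fin M, ((if q = m then 1 else 0) - (if p = m then 1 else 0) : ℝ) ^ 2
      = 2 * ((M : ℝ) - 1) := by
  simp only [sub_sq, ite_pow, one_pow, zero_pow two_ne_zero, mul_ite, mul_one, mul_zero,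
    Finset.sum_add_distrib, Finset.sum_sub_distrib, Finset.sum_ite_eq', Finset.mem_univ,
    if_true, Finset.sum_ite_irrel, Finset.sum_const_zero, Finset.sum_const, Finset.card_univ,
    Fintype.card_fin, nsmul_eq_mul]
  ring

theorem stmt6_general (N M : ℕ)
    (Φ : Matrix (Fin N) (Fin M) ℝ) (i : Fin N) (m : Fin M) :
    ‖(∑ p : Fin M, ∑ q : Fin M,
      starRingEnd ℂ (deriv (deriv (fun t : ℝ =>
        ((Xmat (updE Φ i m t))ᴴ * Xmat (updE Φ i m t)) p q)) (Φ i m)) *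
      (((Xmat Φ)ᴴ * Xmat Φ) p q - if p = q then (N : ℂ) else 0))‖
      ≤ 2 * ((M : ℝ) - 1) * (N : ℝ) := by
  calc _ ≤ ∑ p : Fin M, ∑ q : Fin M,
        ((if q = m then 1 else 0) - (if p = m then 1 else 0) : ℝ) ^ 2 * N := by
        refine (norm_sum_le _ _).trans (Finset.sum_le_sum fun p _ => ?_)
        refine (norm_sum_le _ _).trans (Finset.sum_le_sum fun q _ => ?_)
        rw [norm_mul, Complex.norm_conj, norm_deriv_deriv_Xmat_gram_updE]
        exact mul_le_mul_of_nonneg_left (norm_Xmat_gram_sub_diagonal_le Φ p q) (sq_nonneg _)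
    _ = 2 * ((M : ℝ) - 1) * N := by
        simp only [← Finset.sum_mul, sum_sum_indicator_sub_indicator_sq]

/-- `|Σ_{p,q} conj(∂²(X(Φ)ᴴX(Φ))_{p,q}/∂Φ_{i,m}²) · ((X(Φ)ᴴX(Φ))_{p,q} − N δ_{pq})| ≤ 2(M−1)N`. -/
theorem stmt6 (N M : ℕ) (hN : 1 ≤ N) (hM : 1 ≤ M)
    (Φ : Matrix (Fin N) (Fin M) ℝ) (i : Fin N) (m : Fin M) :
    ‖(∑ p : Fin M, ∑ q : Fin M,
      starRingEnd ℂ (deriv (deriv (fun t : ℝ =>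
        ((Xmat (updE Φ i m t))ᴴ * Xmat (updE Φ i m t)) p q)) (Φ i m)) *
      (((Xmat Φ)ᴴ * Xmat Φ) p q - if p = q then (N : ℂ) else 0))‖
      ≤ 2 * ((M : ℝ) - 1) * (N : ℝ) :=
  stmt6_general N M Φ i m
end

section
/- Let f_0(Φ) = ‖X(Φ)ᴴX(Φ) − N·I‖_F². Then for every Φ ∈ ℝ^{N×M} and all indices 1 ≤ i ≤ N, 1 ≤ m ≤ M, the second partial derivative of f_0 with respect to the single phase variable Φ_{i,m} satisfies |∂²f_0(Φ)/∂Φ_{i,m}²| ≤ 4(M−1)(N+1). -/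
open Matrix

/-- Squared Frobenius norm of a complex matrix. -/
noncomputable def frobSq {m n : Type*} [Fintype m] [Fintype n] (A : Matrix m n ℂ) : ℝ :=
  ∑ i, ∑ j, ‖A i j‖ ^ 2

/-- `f_0(Φ) = ‖X(Φ)ᴴX(Φ) − N·I‖_F²`. -/
noncomputable def f0 (N M : ℕ) (Φ : Matrix (Fin N) (Fin M) ℝ) : ℝ :=
  frobSq ((Xmat Φ)ᴴ * Xmat Φ - (N : ℂ) • (1 : Matrix (Fin M) (Fin M) ℂ))

/-! Only the `m`-th column of `X(Φ)` depends on `t = Φ_{i,m}`, through the single entry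
`e^{it}`. Since all entries are unimodular, the diagonal of `XᴴX − N·I` vanishes, the block away
from row and column `m` does not depend on `t`, and the entry `(m, l)`, `l ≠ m`, is
`e^{-it} X_{i,l} + a_l` with `|a_l| ≤ N − 1` (the entry `(l, m)` is its conjugate). Expanding the
squares shows that `t ↦ f_0` is `c + Re(e^{-it} b)` with `|b| ≤ 4(M − 1)(N − 1)`, and the second
derivative of such a function is `−Re(e^{-it} b)`. -/

open Complex ComplexConjugate Finset

lemma sum_sum_eq_diag_add_cross_add_compl {ι A : Type*} [Fintype ι] [DecidableEq ι]
    [AddCommMonoid A] (h : ι → ι → A) (m : ι) :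
    ∑ l, ∑ l', h l l' =
      h m m + ∑ l ∈ {m}ᶜ, (h m l + h l m) + ∑ l ∈ {m}ᶜ, ∑ l' ∈ {m}ᶜ, h l l' := by
  simp only [Fintype.sum_eq_add_sum_compl m, sum_add_distrib]
  abel

lemma hasDerivAt_re_exp_neg_I_mul (b : ℂ) (s : ℝ) :
    HasDerivAt (fun t : ℝ => (exp (-(I * t)) * b).re) (exp (-(I * s)) * (-I * b)).re s := by
  have h : HasDerivAt (fun z : ℂ => -(I * z)) (-I) s := by
    simpa using ((hasDerivAt_id (s : ℂ)).const_mul I).fun_neg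
  exact HasDerivAt.real_of_complex ((h.cexp.mul_const b).congr_deriv (by ring))

lemma deriv_deriv_const_add_re_exp_neg_I_mul (c : ℝ) (b : ℂ) (s : ℝ) :
    deriv (deriv fun t : ℝ => c + (exp (-(I * t)) * b).re) s = -(exp (-(I * s)) * b).re := by
  have h : deriv (fun t : ℝ => c + (exp (-(I * t)) * b).re) =
      fun t : ℝ => (exp (-(I * t)) * (-I * b)).re :=
    funext fun t => ((hasDerivAt_re_exp_neg_I_mul b t).const_add c).deriv
  rw [h, (hasDerivAt_re_exp_neg_I_mul (-I * b) s).deriv, ← neg_re]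
  congr 1
  linear_combination (exp (-(I * s)) * b) * I_mul_I

lemma norm_exp_neg_I_mul_add_sq (t : ℝ) {u : ℂ} (hu : ‖u‖ = 1) (a : ℂ) :
    ‖exp (-(I * t)) * u + a‖ ^ 2 = 1 + ‖a‖ ^ 2 + 2 * (exp (-(I * t)) * (u * conj a)).re := by
  have he : ‖exp (-(I * t))‖ = 1 := by simp [norm_exp]
  rw [Complex.sq_norm, normSq_add, normSq_mul]
  simp only [normSq_eq_norm_sq, he, hu, mul_assoc]
  ring

lemma re_ofNat_mul (n : ℕ) [n.AtLeastTwo] (z : ℂ) :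
    (ofNat(n) * z).re = ofNat(n) * z.re := by
  simp

section Gram

variable {N M : ℕ} (Φ : Matrix (Fin N) (Fin M) ℝ)

noncomputable def gramDefect : Matrix (Fin M) (Fin M) ℂ := (Xmat Φ)ᴴ * Xmat Φ - (N : ℂ) • 1

noncomputable def gramWithoutRow (i : Fin N) (m l : Fin M) : ℂ :=
  ∑ k ∈ {i}ᶜ, conj (Xmat Φ k m) * Xmat Φ k l

lemma norm_Xmat (k : Fin N) (l : Fin M) : ‖Xmat Φ k l‖ = 1 := by
  simp [Xmat, norm_exp]

lemma conj_Xmat_mul_self (k : Fin N) (l : Fin M) : conj (Xmat Φ k l) * Xmat Φ k l = 1 := by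
  rw [← normSq_eq_conj_mul_self, ← Complex.sq_norm, norm_Xmat]
  norm_num

lemma gramDefect_apply_self (l : Fin M) : gramDefect Φ l l = 0 := by
  simp [gramDefect, Matrix.mul_apply, conj_Xmat_mul_self]

lemma norm_gramDefect_comm (l l' : Fin M) : ‖gramDefect Φ l l'‖ = ‖gramDefect Φ l' l‖ := by
  have hG : (gramDefect Φ).IsHermitian :=
    (Matrix.isHermitian_conjTranspose_mul_self _).sub (Matrix.isHermitian_one.smul (.natCast N))
  rw [← hG.apply l l', norm_star]

lemma norm_gramWithoutRow_le (i : Fin N) (m l : Fin M) :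
    ‖gramWithoutRow Φ i m l‖ ≤ N - 1 := by
  calc ‖gramWithoutRow Φ i m l‖ ≤ ∑ k ∈ ({i}ᶜ : Finset (Fin N)), (1 : ℝ) :=
        norm_sum_le_of_le _ fun k _ => by rw [norm_mul, norm_conj, norm_Xmat, norm_Xmat, one_mul]
    _ = N - 1 := by simp [card_compl, Nat.cast_pred i.pos]

variable (i : Fin N) (m : Fin M) (t : ℝ)

lemma Xmat_updE_of_ne {k : Fin N} {l : Fin M} (h : ¬(k = i ∧ l = m)) :
    Xmat (updE Φ i m t) k l = Xmat Φ k l := by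
  simp [Xmat, updE, h]

lemma gramDefect_updE_of_ne {l l' : Fin M} (hl : l ≠ m) (hl' : l' ≠ m) :
    gramDefect (updE Φ i m t) l l' = gramDefect Φ l l' := by
  simp [gramDefect, Matrix.mul_apply, Xmat_updE_of_ne, hl, hl']

lemma gramDefect_updE_apply {l : Fin M} (hl : l ≠ m) :
    gramDefect (updE Φ i m t) m l = exp (-(I * t)) * Xmat Φ i l + gramWithoutRow Φ i m l := by
  rw [gramDefect, Matrix.sub_apply, Matrix.smul_apply, Matrix.one_apply_ne hl.symm, smul_zero,
    sub_zero, Matrix.mul_apply, Fintype.sum_eq_add_sum_compl i, gramWithoutRow]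
  congr 1
  · simp [Xmat, updE, hl, ← exp_conj]
  · refine sum_congr rfl fun k hk => ?_
    have hki : k ≠ i := by simpa using hk
    simp [Xmat_updE_of_ne, hki]

end Gram

theorem exists_f0_updE_eq_const_add_re {N M : ℕ} (Φ : Matrix (Fin N) (Fin M) ℝ) (i : Fin N)
    (m : Fin M) : ∃ (c : ℝ) (b : ℂ), ‖b‖ ≤ 4 * ((M : ℝ) - 1) * ((N : ℝ) - 1) ∧
      ∀ t : ℝ, f0 N M (updE Φ i m t) = c + (exp (-(I * t)) * b).re := by
  refine ⟨∑ l ∈ {m}ᶜ, 2 * (1 + ‖gramWithoutRow Φ i m l‖ ^ 2) +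
      ∑ l ∈ {m}ᶜ, ∑ l' ∈ {m}ᶜ, ‖gramDefect Φ l l'‖ ^ 2,
    4 * ∑ l ∈ {m}ᶜ, Xmat Φ i l * conj (gramWithoutRow Φ i m l), ?_, fun t => ?_⟩
  · have hsum : ‖∑ l ∈ {m}ᶜ, Xmat Φ i l * conj (gramWithoutRow Φ i m l)‖ ≤
        ∑ l ∈ ({m}ᶜ : Finset (Fin M)), ((N : ℝ) - 1) := norm_sum_le_of_le _ fun l _ => by
      rw [norm_mul, norm_conj, norm_Xmat, one_mul]
      exact norm_gramWithoutRow_le Φ i m l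
    rw [norm_mul, RCLike.norm_ofNat, mul_assoc]
    gcongr
    refine hsum.trans_eq ?_
    rw [sum_const, card_compl, card_singleton, Fintype.card_fin, nsmul_eq_mul, Nat.cast_pred m.pos]
  · have hcross : ∀ l ∈ ({m}ᶜ : Finset (Fin M)),
        ‖gramDefect (updE Φ i m t) m l‖ ^ 2 + ‖gramDefect (updE Φ i m t) l m‖ ^ 2 =
          2 * (1 + ‖gramWithoutRow Φ i m l‖ ^ 2) +
            4 * (exp (-(I * t)) * (Xmat Φ i l * conj (gramWithoutRow Φ i m l))).re := by
      intro l hl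
      rw [norm_gramDefect_comm _ l m, gramDefect_updE_apply Φ i m t (by simpa using hl),
        norm_exp_neg_I_mul_add_sq t (norm_Xmat Φ i l)]
      ring
    have hrest : ∀ l ∈ ({m}ᶜ : Finset (Fin M)),
        ∑ l' ∈ {m}ᶜ, ‖gramDefect (updE Φ i m t) l l'‖ ^ 2 =
          ∑ l' ∈ {m}ᶜ, ‖gramDefect Φ l l'‖ ^ 2 := fun l hl => sum_congr rfl fun l' hl' => by
      rw [gramDefect_updE_of_ne Φ i m t (by simpa using hl) (by simpa using hl')]
    change frobSq (gramDefect _) = _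
    rw [frobSq, sum_sum_eq_diag_add_cross_add_compl _ m, gramDefect_apply_self,
      sum_congr rfl hcross, sum_congr rfl hrest, mul_left_comm, re_ofNat_mul, mul_sum, re_sum,
      mul_sum, sum_add_distrib, norm_zero, zero_pow two_ne_zero, zero_add]
    ring

theorem stmt7_general (N M : ℕ)
    (Φ : Matrix (Fin N) (Fin M) ℝ) (i : Fin N) (m : Fin M) :
    |deriv (deriv (fun t : ℝ => f0 N M (updE Φ i m t))) (Φ i m)|
      ≤ 4 * ((M : ℝ) - 1) * ((N : ℝ) + 1) := by
  obtain ⟨c, b, hb, hf⟩ := exists_f0_updE_eq_const_add_re Φ i m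
  rw [funext hf, deriv_deriv_const_add_re_exp_neg_I_mul, abs_neg]
  have hM1 : (1 : ℝ) ≤ M := by exact_mod_cast m.pos
  calc |(exp (-(I * Φ i m)) * b).re| ≤ ‖exp (-(I * Φ i m)) * b‖ := abs_re_le_norm _
    _ = ‖b‖ := by simp [norm_exp]
    _ ≤ 4 * ((M : ℝ) - 1) * ((N : ℝ) - 1) := hb
    _ ≤ 4 * ((M : ℝ) - 1) * ((N : ℝ) + 1) := by nlinarith

/-- The second partial derivative of `f_0` with respect to the single phase variable
`Φ_{i,m}` is bounded in absolute value by `4(M−1)(N+1)`. -/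
theorem stmt7 (N M : ℕ) (hN : 1 ≤ N) (hM : 1 ≤ M)
    (Φ : Matrix (Fin N) (Fin M) ℝ) (i : Fin N) (m : Fin M) :
    |deriv (deriv (fun t : ℝ => f0 N M (updE Φ i m t))) (Φ i m)|
      ≤ 4 * ((M : ℝ) - 1) * ((N : ℝ) + 1) :=
  stmt7_general N M Φ i m
end

section
/- (Lemma 5 / lower bound of the augmented Lagrangian term) Let f : ℝ^{N×M} → ℝ be differentiable with L-Lipschitz gradient (L ≥ 0) and let ρ > 0. If Λ = −∇f(Φ) − L(Ψ − Φ), then f(Ψ) + ⟨Λ, Ψ − Φ⟩ + (ρ/2)‖Ψ − Φ‖_F² ≥ f(Φ) + ((ρ − 5L)/2)‖Ψ − Φ‖_F². In particular, if moreover f ≥ 0 on ℝ^{N×M} and ρ ≥ 5L, then f(Ψ) + ⟨Λ, Ψ − Φ⟩ + (ρ/2)‖Ψ − Φ‖_F² ≥ 0. -/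
open scoped RealInnerProductSpace NNReal

/-!
By the mean value inequality applied to `f - ⟪∇f(Φ), ·⟫`, whose derivative on the segment
`[Φ, Ψ]` is bounded by `L‖Ψ - Φ‖`, we get `f(Ψ) ≥ f(Φ) + ⟪∇f(Φ), Ψ - Φ⟫ - L‖Ψ - Φ‖²`.
The choice of `Λ` cancels the linear term and costs another `L‖Ψ - Φ‖²`, so the left-hand side
is at least `f(Φ) + ((ρ - 4L)/2)‖Ψ - Φ‖²`.
-/

section LipschitzGradient

variable {E : Type*} [NormedAddCommGroup E] [InnerProductSpace ℝ E] [CompleteSpace E]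
  {f : E → ℝ}

theorem norm_fderiv_sub_fderiv_eq_norm_gradient_sub (x y : E) :
    ‖fderiv ℝ f x - fderiv ℝ f y‖ = ‖gradient f x - gradient f y‖ := by
  rw [← toDual_gradient, ← toDual_gradient, ← map_sub, LinearIsometryEquiv.norm_map]

theorem abs_sub_sub_inner_gradient_le {K : ℝ≥0} (hf : Differentiable ℝ f)
    (hK : LipschitzWith K (gradient f)) (x y : E) :
    |f y - f x - ⟪gradient f x, y - x⟫| ≤ K * ‖y - x‖ ^ 2 := by
  have bound : ∀ z ∈ segment ℝ x y, ‖fderiv ℝ f z - fderiv ℝ f x‖ ≤ K * ‖y - x‖ :=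
    fun z hz => calc
      ‖fderiv ℝ f z - fderiv ℝ f x‖ = ‖gradient f z - gradient f x‖ :=
        norm_fderiv_sub_fderiv_eq_norm_gradient_sub z x
      _ ≤ K * ‖z - x‖ := hK.norm_sub_le z x
      _ ≤ K * ‖y - x‖ := by gcongr; exact norm_sub_le_of_mem_segment hz
  have mvt := (convex_segment x y).norm_image_sub_le_of_norm_fderiv_le' (fun z _ => hf z) bound
    (left_mem_segment ℝ x y) (right_mem_segment ℝ x y)
  rwa [← inner_gradient_left, Real.norm_eq_abs, mul_assoc, ← sq] at mvt

theorem augmentedLagrangian_ge {K : ℝ≥0} (hf : Differentiable ℝ f)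
    (hK : LipschitzWith K (gradient f)) (ρ : ℝ) (Φ Ψ : E) :
    f Φ + (ρ - 4 * K) / 2 * ‖Ψ - Φ‖ ^ 2 ≤
      f Ψ + ⟪-gradient f Φ - (K : ℝ) • (Ψ - Φ), Ψ - Φ⟫ + ρ / 2 * ‖Ψ - Φ‖ ^ 2 := by
  have descent := neg_le_of_abs_le (abs_sub_sub_inner_gradient_le hf hK Φ Ψ)
  rw [inner_sub_left, inner_neg_left, real_inner_smul_left, real_inner_self_eq_norm_sq]
  linarith

end LipschitzGradient

theorem stmt12_general (N M : ℕ)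
    (f : EuclideanSpace ℝ (Fin N × Fin M) → ℝ) (L ρ : ℝ) (hL : 0 ≤ L)
    (hdiff : Differentiable ℝ f)
    (hLip : ∀ x y : EuclideanSpace ℝ (Fin N × Fin M),
      ‖gradient f x - gradient f y‖ ≤ L * ‖x - y‖)
    (Φ Ψ Λ : EuclideanSpace ℝ (Fin N × Fin M))
    (hΛ : Λ = -gradient f Φ - L • (Ψ - Φ)) :
    (f Ψ + ⟪Λ, Ψ - Φ⟫ + ρ / 2 * ‖Ψ - Φ‖ ^ 2 ≥
      f Φ + (ρ - 5 * L) / 2 * ‖Ψ - Φ‖ ^ 2) ∧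
    ((∀ x, 0 ≤ f x) → 5 * L ≤ ρ →
      0 ≤ f Ψ + ⟪Λ, Ψ - Φ⟫ + ρ / 2 * ‖Ψ - Φ‖ ^ 2) := by
  lift L to ℝ≥0 using hL
  have hK : LipschitzWith L (gradient f) :=
    LipschitzWith.of_dist_le_mul fun x y => by simpa only [dist_eq_norm] using hLip x y
  have bound := augmentedLagrangian_ge hdiff hK ρ Φ Ψ
  rw [← hΛ] at bound
  have main : f Φ + (ρ - 5 * L) / 2 * ‖Ψ - Φ‖ ^ 2 ≤
      f Ψ + ⟪Λ, Ψ - Φ⟫ + ρ / 2 * ‖Ψ - Φ‖ ^ 2 := by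
    linarith [mul_nonneg L.coe_nonneg (sq_nonneg ‖Ψ - Φ‖)]
  refine ⟨main, fun hf hρ => ?_⟩
  linarith [hf Φ, mul_nonneg (by linarith : (0 : ℝ) ≤ (ρ - 5 * L) / 2) (sq_nonneg ‖Ψ - Φ‖)]

/-- (Lemma 5) Lower bound of the augmented Lagrangian term: if `f` has an `L`-Lipschitz
gradient, `ρ > 0`, and `Λ = −∇f(Φ) − L(Ψ − Φ)`, then
`f(Ψ) + ⟨Λ, Ψ − Φ⟩ + (ρ/2)‖Ψ − Φ‖² ≥ f(Φ) + ((ρ − 5L)/2)‖Ψ − Φ‖²`; in particular if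
moreover `f ≥ 0` and `ρ ≥ 5L` then the left-hand side is nonnegative. -/
theorem stmt12 (N M : ℕ)
    (f : EuclideanSpace ℝ (Fin N × Fin M) → ℝ) (L ρ : ℝ) (hL : 0 ≤ L) (hρ : 0 < ρ)
    (hdiff : Differentiable ℝ f)
    (hLip : ∀ x y : EuclideanSpace ℝ (Fin N × Fin M),
      ‖gradient f x - gradient f y‖ ≤ L * ‖x - y‖)
    (Φ Ψ Λ : EuclideanSpace ℝ (Fin N × Fin M))
    (hΛ : Λ = -gradient f Φ - L • (Ψ - Φ)) :
    (f Ψ + ⟪Λ, Ψ - Φ⟫ + ρ / 2 * ‖Ψ - Φ‖ ^ 2 ≥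
      f Φ + (ρ - 5 * L) / 2 * ‖Ψ - Φ‖ ^ 2) ∧
    ((∀ x, 0 ≤ f x) → 5 * L ≤ ρ →
      0 ≤ f Ψ + ⟪Λ, Ψ - Φ⟫ + ρ / 2 * ‖Ψ - Φ‖ ^ 2) :=
  stmt12_general N M f L ρ hL hdiff hLip Φ Ψ Λ hΛ
end

section
/- (Theorem 2, limit points of consensus-PDMM are stationary) Assume M ≥ 2. For each n ∈ T let L_n > 0 be such that ∇f_n is L_n-Lipschitz, and let ρ_n ≥ 9L_n for n ∈ T∖{0}. Let C = [0, 2π]^{N×M} and let sequences (Φᵏ)_{k≥1} ⊆ C, (Φ_nᵏ)_{k≥1}, (Λ_nᵏ)_{k≥1} (n ∈ T∖{0}) satisfy, for all k ≥ 1: (i) Φ^{k+1} is a minimizer over C of Φ ↦ ⟨∇f_0(Φᵏ), Φ − Φᵏ⟩ + (L_0/2)‖Φ − Φᵏ‖_F² + Σ_{n∈T∖{0}}[ ⟨Λ_nᵏ, Φ_nᵏ − Φ⟩ + (ρ_n/2)‖Φ_nᵏ − Φ‖_F² ]; (ii) Φ_n^{k+1} = (L_n Φ_nᵏ + ρ_n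 Φᵏ − Λ_nᵏ − ∇f_n(Φ_nᵏ))/(L_n + ρ_n); (iii) Λ_n^{k+1} = Λ_nᵏ + ρ_n(Φ_n^{k+1} − Φᵏ). If the sequences converge, i.e., Φᵏ → Φ*, Φ_nᵏ → Φ_n*, Λ_nᵏ → Λ_n* with Φ_n* = Φ* for every n ∈ T∖{0}, then Φ* is a stationary point of the constrained problem: ⟨Σ_{n∈T} ∇f_n(Φ*), Φ − Φ*⟩ ≥ 0 for all Φ ∈ C. -/
open Matrix Filter
open scoped RealInnerProductSpace
open Real

/-- The `N × N` shift matrix `S_n`: `(S_n)_{k,l} = 1` if `k - l = n` and `0` otherwise. -/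
noncomputable def Smat (N : ℕ) (n : ℤ) : Matrix (Fin N) (Fin N) ℂ :=
  fun k l => if ((k : ℕ) : ℤ) - ((l : ℕ) : ℤ) = n then 1 else 0

/-- `ℝ^{N×M}` with the Frobenius inner product. -/
abbrev FrobSpace (N M : ℕ) := EuclideanSpace ℝ (Fin N × Fin M)

/-- The unimodular matrix `X(Φ)` with entries `exp(i Φ_{k,m})`. -/
noncomputable def XmatE {N M : ℕ} (Φ : FrobSpace N M) : Matrix (Fin N) (Fin M) ℂ :=
  fun k m => Complex.exp (Complex.I * (Φ (k, m) : ℂ))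

/-- `f_n(Φ) = ‖X(Φ)ᴴ S_n X(Φ) − N δ_n I‖_F²`. -/
noncomputable def fnE (N M : ℕ) (n : ℤ) (Φ : FrobSpace N M) : ℝ :=
  frobSq ((XmatE Φ)ᴴ * Smat N n * XmatE Φ -
    if n = 0 then (N : ℂ) • (1 : Matrix (Fin M) (Fin M) ℂ) else 0)

/-- The box `C = [0, 2π]^{N×M}`. -/
def Cbox (N M : ℕ) : Set (FrobSpace N M) := {Φ | ∀ p, Φ p ∈ Set.Icc 0 (2 * π)}

/-!
Pass to the limit in the updates. In the limit of (ii), with `Φ_n* = Φ*`, the proximal terms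
cancel and leave `Λ_n* = -∇f_n(Φ*)`. In the limit of (i) the left side tends to `0`, so with
these multipliers the quadratic `Φ ↦ ⟪Σ_{n∈T} ∇f_n(Φ*), Φ - Φ*⟫ + c ‖Φ - Φ*‖²` is nonnegative on
`C` and vanishes at `Φ*`. Since `C` is convex, the first-order condition at this minimum is the
claimed variational inequality.
-/

section
variable {E ι : Type*} [NormedAddCommGroup E] [InnerProductSpace ℝ E]

/-- The objective of the `Φ`-step (i), with `g = ∇f₀(Φᵏ)`, `x = Φᵏ`, `Λ n = Λ_nᵏ`, `z n = Φ_nᵏ`. -/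
noncomputable def pdmmSurrogate (s : Finset ι) (α : ℝ) (ρ : ι → ℝ) (g x : E) (Λ z : ι → E)
    (y : E) : ℝ :=
  ⟪g, y - x⟫ + α / 2 * ‖y - x‖ ^ 2 + ∑ n ∈ s, (⟪Λ n, z n - y⟫ + ρ n / 2 * ‖z n - y‖ ^ 2)

theorem pdmmSurrogate_self (s : Finset ι) (α : ℝ) (ρ : ι → ℝ) (g x : E) (Λ : ι → E) :
    pdmmSurrogate s α ρ g x Λ (fun _ => x) x = 0 := by
  simp [pdmmSurrogate]

theorem pdmmSurrogate_neg_consensus (s : Finset ι) (α : ℝ) (ρ : ι → ℝ) (g x : E) (G : ι → E)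
    (y : E) :
    pdmmSurrogate s α ρ g x (fun n => -G n) (fun _ => x) y =
      ⟪g + ∑ n ∈ s, G n, y - x⟫ + (α / 2 + ∑ n ∈ s, ρ n / 2) * ‖y - x‖ ^ 2 := by
  simp only [pdmmSurrogate, inner_neg_left, ← inner_neg_right, neg_sub, norm_sub_rev x y,
    inner_add_left, sum_inner, Finset.sum_add_distrib, add_mul, Finset.sum_mul]
  ring

theorem tendsto_pdmmSurrogate {κ : Type*} {l : Filter κ} (s : Finset ι) (α : ℝ) (ρ : ι → ℝ)
    {g x y : κ → E} {Λ z : ι → κ → E} {g₀ x₀ y₀ : E} {Λ₀ z₀ : ι → E}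
    (hg : Tendsto g l (nhds g₀)) (hx : Tendsto x l (nhds x₀))
    (hΛ : ∀ n ∈ s, Tendsto (Λ n) l (nhds (Λ₀ n))) (hz : ∀ n ∈ s, Tendsto (z n) l (nhds (z₀ n)))
    (hy : Tendsto y l (nhds y₀)) :
    Tendsto (fun k => pdmmSurrogate s α ρ (g k) (x k) (fun n => Λ n k) (fun n => z n k) (y k)) l
      (nhds (pdmmSurrogate s α ρ g₀ x₀ Λ₀ z₀ y₀)) :=
  ((hg.inner (hy.sub hx)).add (((hy.sub hx).norm.pow 2).const_mul _)).add
    (tendsto_finsetSum s fun n hn =>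
      ((hΛ n hn).inner ((hz n hn).sub hy)).add ((((hz n hn).sub hy).norm.pow 2).const_mul _))

theorem eq_neg_of_tendsto_linearized_update {G : E → E} (hG : Continuous G) {L ρ : ℝ}
    (hLρ : L + ρ ≠ 0) {x z Λ : ℕ → E} {x₀ Λ₀ : E} (hx : Tendsto x atTop (nhds x₀))
    (hz : Tendsto z atTop (nhds x₀)) (hΛ : Tendsto Λ atTop (nhds Λ₀))
    (hupd : ∀ k, z (k + 1) = (L + ρ)⁻¹ • (L • z k + ρ • x k - Λ k - G (z k))) :
    Λ₀ = -G x₀ := by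
  have hfix : x₀ = (L + ρ)⁻¹ • (L • x₀ + ρ • x₀ - Λ₀ - G x₀) := by
    refine tendsto_nhds_unique ((tendsto_add_atTop_iff_nat 1).2 hz) ?_
    simp only [hupd]
    exact ((((hz.const_smul L).add (hx.const_smul ρ)).sub hΛ).sub
      ((hG.tendsto x₀).comp hz)).const_smul _
  rw [eq_inv_smul_iff₀ hLρ, add_smul] at hfix
  linear_combination (norm := module) hfix

/-- `x` minimizes `y ↦ ⟪g, y - x⟫ + c ‖y - x‖²` over `s`, and the derivative there is `⟪g, ·⟫`. -/
theorem Convex.inner_nonneg_of_forall_inner_add_mul_norm_sq_nonneg {s : Set E}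
    (hs : Convex ℝ s) {x g : E} (c : ℝ) (hx : x ∈ s)
    (h : ∀ y ∈ s, 0 ≤ ⟪g, y - x⟫ + c * ‖y - x‖ ^ 2) :
    ∀ y ∈ s, 0 ≤ ⟪g, y - x⟫ := by
  intro y hy
  have hmin : IsMinOn (fun y => ⟪g, y - x⟫ + c * ‖y - x‖ ^ 2) s x := fun y hy => by
    simpa using h y hy
  have hderiv : HasFDerivAt (fun y => ⟪g, y - x⟫ + c * ‖y - x‖ ^ 2) (innerSL ℝ g) x := by
    have := ((hasFDerivAt_const g x).inner ℝ ((hasFDerivAt_id x).sub_const x)).add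
      (((hasFDerivAt_id x).sub_const x).norm_sq.const_mul c)
    convert this using 1 <;> first | rfl | (ext y; simp)
  simpa using hmin.localize.hasFDerivWithinAt_nonneg hderiv.hasFDerivWithinAt
    (sub_mem_posTangentConeAt_of_segment_subset (hs.segment_subset hx hy))

end

theorem isClosed_Cbox (N M : ℕ) : IsClosed (Cbox N M) := by
  rw [Cbox, Set.ofPred_forall]
  exact isClosed_iInter fun p => isClosed_Icc.preimage (EuclideanSpace.proj p).continuous

theorem convex_Cbox (N M : ℕ) : Convex ℝ (Cbox N M) := by
  rw [Cbox, Set.ofPred_forall]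
  exact convex_iInter fun p =>
    (convex_Icc 0 (2 * π)).linear_preimage (EuclideanSpace.proj p).toLinearMap

theorem stmt15_general (N M : ℕ)
    (T : Finset ℤ) (h0 : (0 : ℤ) ∈ T)
    (L ρ : ℤ → ℝ)
    (hL : ∀ n ∈ T, 0 < L n)
    (hLip : ∀ n ∈ T, ∀ Φ Φ' : FrobSpace N M,
      ‖gradient (fnE N M n) Φ - gradient (fnE N M n) Φ'‖ ≤ L n * ‖Φ - Φ'‖)
    (hρ : ∀ n ∈ T.erase 0, 9 * L n ≤ ρ n)
    (Φs : ℕ → FrobSpace N M) (Φns Λns : ℤ → ℕ → FrobSpace N M)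
    (hC : ∀ k, Φs k ∈ Cbox N M)
    (hmin : ∀ k, ∀ Φ ∈ Cbox N M,
      (⟪gradient (fnE N M 0) (Φs k), Φs (k + 1) - Φs k⟫ +
          L 0 / 2 * ‖Φs (k + 1) - Φs k‖ ^ 2 +
          ∑ n ∈ T.erase 0, (⟪Λns n k, Φns n k - Φs (k + 1)⟫ +
            ρ n / 2 * ‖Φns n k - Φs (k + 1)‖ ^ 2)) ≤
        (⟪gradient (fnE N M 0) (Φs k), Φ - Φs k⟫ +
          L 0 / 2 * ‖Φ - Φs k‖ ^ 2 +
          ∑ n ∈ T.erase 0, (⟪Λns n k, Φns n k - Φ⟫ +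
            ρ n / 2 * ‖Φns n k - Φ‖ ^ 2)))
    (hupd : ∀ k, ∀ n ∈ T.erase 0,
      Φns n (k + 1) = (L n + ρ n)⁻¹ •
        (L n • Φns n k + ρ n • Φs k - Λns n k - gradient (fnE N M n) (Φns n k)))
    (Φstar : FrobSpace N M) (Φnstar Λnstar : ℤ → FrobSpace N M)
    (hconv : Tendsto Φs atTop (nhds Φstar))
    (hconvn : ∀ n ∈ T.erase 0, Tendsto (Φns n) atTop (nhds (Φnstar n)))
    (hconvΛ : ∀ n ∈ T.erase 0, Tendsto (Λns n) atTop (nhds (Λnstar n)))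
    (heq : ∀ n ∈ T.erase 0, Φnstar n = Φstar) :
    ∀ Φ ∈ Cbox N M, 0 ≤ ⟪∑ n ∈ T, gradient (fnE N M n) Φstar, Φ - Φstar⟫ := by
  have hgrad : ∀ n ∈ T, Continuous (gradient (fnE N M n)) := fun n hn =>
    (LipschitzWith.of_dist_le' fun Φ Φ' => by
      simpa only [dist_eq_norm] using hLip n hn Φ Φ').continuous
  have hconsensus : ∀ n ∈ T.erase 0, Tendsto (Φns n) atTop (nhds Φstar) := fun n hn =>
    heq n hn ▸ hconvn n hn
  have hmult : ∀ n ∈ T.erase 0, Tendsto (Λns n) atTop (nhds (-gradient (fnE N M n) Φstar)) := by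
    intro n hn
    have hnT := Finset.mem_of_mem_erase hn
    have hLρ : 0 < L n + ρ n := by linarith [hL n hnT, hρ n hn]
    rw [← eq_neg_of_tendsto_linearized_update (hgrad n hnT) hLρ.ne' hconv (hconsensus n hn)
      (hconvΛ n hn) (fun k => hupd k n hn)]
    exact hconvΛ n hn
  have hΦstar : Φstar ∈ Cbox N M := (isClosed_Cbox N M).mem_of_tendsto hconv (.of_forall hC)
  refine (convex_Cbox N M).inner_nonneg_of_forall_inner_add_mul_norm_sq_nonneg
    (L 0 / 2 + ∑ n ∈ T.erase 0, ρ n / 2) hΦstar fun Φ hΦ => ?_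
  have hgrad0 := ((hgrad 0 h0).tendsto Φstar).comp hconv
  have hlim := le_of_tendsto_of_tendsto'
    (tendsto_pdmmSurrogate (T.erase 0) (L 0) ρ (Λ₀ := fun n => -gradient (fnE N M n) Φstar)
      (z₀ := fun _ => Φstar) hgrad0 hconv hmult hconsensus (hconv.comp (tendsto_add_atTop_nat 1)))
    (tendsto_pdmmSurrogate (T.erase 0) (L 0) ρ hgrad0 hconv hmult hconsensus tendsto_const_nhds)
    (fun k => hmin k Φ hΦ)
  rwa [pdmmSurrogate_self, pdmmSurrogate_neg_consensus,
    Finset.add_sum_erase T (fun n => gradient (fnE N M n) Φstar) h0] at hlim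

/-- (Theorem 2) If the consensus-PDMM iterates converge, with `Φ_n* = Φ*` for all
`n ∈ T∖{0}`, then the limit `Φ*` is a stationary point of `min Σ_{n∈T} f_n` over `C`. -/
theorem stmt15 (N M : ℕ) (hN : 1 ≤ N) (hM : 2 ≤ M)
    (T : Finset ℤ) (hT : T ⊆ Finset.Icc (-((N : ℤ) - 1)) ((N : ℤ) - 1)) (h0 : (0 : ℤ) ∈ T)
    (L ρ : ℤ → ℝ)
    (hL : ∀ n ∈ T, 0 < L n)
    (hLip : ∀ n ∈ T, ∀ Φ Φ' : FrobSpace N M,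
      ‖gradient (fnE N M n) Φ - gradient (fnE N M n) Φ'‖ ≤ L n * ‖Φ - Φ'‖)
    (hρ : ∀ n ∈ T.erase 0, 9 * L n ≤ ρ n)
    (Φs : ℕ → FrobSpace N M) (Φns Λns : ℤ → ℕ → FrobSpace N M)
    (hC : ∀ k, Φs k ∈ Cbox N M)
    (hmin : ∀ k, ∀ Φ ∈ Cbox N M,
      (⟪gradient (fnE N M 0) (Φs k), Φs (k + 1) - Φs k⟫ +
          L 0 / 2 * ‖Φs (k + 1) - Φs k‖ ^ 2 +
          ∑ n ∈ T.erase 0, (⟪Λns n k, Φns n k - Φs (k + 1)⟫ +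
            ρ n / 2 * ‖Φns n k - Φs (k + 1)‖ ^ 2)) ≤
        (⟪gradient (fnE N M 0) (Φs k), Φ - Φs k⟫ +
          L 0 / 2 * ‖Φ - Φs k‖ ^ 2 +
          ∑ n ∈ T.erase 0, (⟪Λns n k, Φns n k - Φ⟫ +
            ρ n / 2 * ‖Φns n k - Φ‖ ^ 2)))
    (hupd : ∀ k, ∀ n ∈ T.erase 0,
      Φns n (k + 1) = (L n + ρ n)⁻¹ •
        (L n • Φns n k + ρ n • Φs k - Λns n k - gradient (fnE N M n) (Φns n k)))
    (hΛ : ∀ k, ∀ n ∈ T.erase 0,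
      Λns n (k + 1) = Λns n k + ρ n • (Φns n (k + 1) - Φs k))
    (Φstar : FrobSpace N M) (Φnstar Λnstar : ℤ → FrobSpace N M)
    (hconv : Tendsto Φs atTop (nhds Φstar))
    (hconvn : ∀ n ∈ T.erase 0, Tendsto (Φns n) atTop (nhds (Φnstar n)))
    (hconvΛ : ∀ n ∈ T.erase 0, Tendsto (Λns n) atTop (nhds (Λnstar n)))
    (heq : ∀ n ∈ T.erase 0, Φnstar n = Φstar) :
    ∀ Φ ∈ Cbox N M, 0 ≤ ⟪∑ n ∈ T, gradient (fnE N M n) Φstar, Φ - Φstar⟫ :=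
  stmt15_general N M T h0 L ρ hL hLip hρ Φs Φns Λns hC hmin hupd Φstar Φnstar Λnstar hconv hconvn
    hconvΛ heq
end
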